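/- arXiv:1711.01709 — 4 statements merged into one kernel-verified Lean document; each statement's English description precedes it below -/
import Mathlib

section
/- If m, n, r are positive integers and s is a real number (or integer) with s ≥ n/((1+1/m)^{1/r} − 1), then ∏_{ℓ=1}^{r} (1 + n/(s+ℓ)) ≤ 1 + 1/m, and hence (m+1)·C(n+s', s') ≥ m·C(n+r+s', r+s') for every integer s' ≥ s. -/
/-!
With `t = (1 + 1/m)^(1/r)`, the hypothesis says `n ≤ s (t - 1)`, so every factor satisfies
`1 + n/(s + ℓ) ≤ t` and the product is at most `t^r = 1 + 1/m`. The binomial inequality follows from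
`C(n+r+s', r+s') = C(n+s', s') · ∏_{ℓ=1}^r (1 + n/(s'+ℓ))`, applied with `s' ≥ s`.
-/

open Finset

theorem cast_choose_add_eq_mul_prod (n k : ℕ) : ∀ r : ℕ,
    ((n + r + k).choose (r + k) : ℝ) =
      (n + k).choose k * ∏ ℓ ∈ Icc 1 r, (1 + (n : ℝ) / (k + ℓ))
  | 0 => by simp
  | r + 1 => by
    have hstep : ((n + r + k + 1 : ℕ) : ℝ) * (n + r + k).choose (r + k) =
        (n + r + k + 1).choose (r + k + 1) * ((r + k + 1 : ℕ) : ℝ) := by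
      exact_mod_cast Nat.add_one_mul_choose_eq (n + r + k) (r + k)
    have hpos : (0 : ℝ) < k + (r + 1) := by positivity
    rw [prod_Icc_succ_top (by omega), ← mul_assoc, ← cast_choose_add_eq_mul_prod n k r,
      show n + (r + 1) + k = n + r + k + 1 by omega, show r + 1 + k = r + k + 1 by omega]
    push_cast at hstep ⊢
    field_simp
    linarith

theorem prod_one_add_div_le_pow {n s t : ℝ} (hn : 0 ≤ n) (ht : 1 < t) (hs : n / (t - 1) ≤ s)
    (r : ℕ) : ∏ ℓ ∈ Icc 1 r, (1 + n / (s + ℓ)) ≤ t ^ r := by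
  have hs₀ : 0 ≤ s := (div_nonneg hn (sub_nonneg.mpr ht.le)).trans hs
  have hns : n ≤ s * (t - 1) := (div_le_iff₀ (sub_pos.mpr ht)).mp hs
  calc ∏ ℓ ∈ Icc 1 r, (1 + n / (s + ℓ)) ≤ ∏ _ℓ ∈ Icc 1 r, t := by
        refine prod_le_prod (fun ℓ _ => by positivity) (fun ℓ hℓ => ?_)
        have hℓ : (1 : ℝ) ≤ ℓ := by exact_mod_cast (mem_Icc.mp hℓ).1
        rw [← le_sub_iff_add_le', div_le_iff₀ (by linarith)]
        nlinarith
    _ = t ^ r := by simp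

theorem stmt2_general (m n r : ℕ) (hm : 0 < m) (hr : 0 < r) (s : ℝ)
    (hs : s ≥ (n : ℝ) / ((1 + 1 / (m : ℝ)) ^ ((1 : ℝ) / r) - 1)) :
    (∏ ℓ ∈ Finset.Icc 1 r, (1 + (n : ℝ) / (s + ℓ))) ≤ 1 + 1 / (m : ℝ) ∧
      ∀ s' : ℕ, s ≤ (s' : ℝ) →
        ((m + 1 : ℝ) * Nat.choose (n + s') s' ≥ (m : ℝ) * Nat.choose (n + r + s') (r + s')) := by
  set t : ℝ := (1 + 1 / (m : ℝ)) ^ ((1 : ℝ) / r) with ht_def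
  have hm' : (0 : ℝ) < m := by exact_mod_cast hm
  have ht : 1 < t := Real.one_lt_rpow (by simpa using hm') (by positivity)
  have htr : t ^ r = 1 + 1 / (m : ℝ) := by
    rw [ht_def, one_div (r : ℝ), Real.rpow_inv_natCast_pow (by positivity) hr.ne']
  refine ⟨htr ▸ prod_one_add_div_le_pow n.cast_nonneg ht hs r, fun s' hss' => ?_⟩
  have hprod := htr ▸ prod_one_add_div_le_pow n.cast_nonneg ht (hs.le.trans hss') r
  calc (m : ℝ) * (n + r + s').choose (r + s')
      ≤ m * ((n + s').choose s' * (1 + 1 / m)) := by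
        rw [cast_choose_add_eq_mul_prod]
        gcongr
    _ = (m + 1) * (n + s').choose s' := by field_simp

/-- if `s ≥ n/((1+1/m)^(1/r) − 1)` then `∏_{ℓ=1}^r (1+n/(s+ℓ)) ≤ 1+1/m`,
and `(m+1)·C(n+s',s') ≥ m·C(n+r+s',r+s')` for every integer `s' ≥ s`. -/
theorem stmt2 (m n r : ℕ) (hm : 0 < m) (hn : 0 < n) (hr : 0 < r) (s : ℝ)
    (hs : s ≥ (n : ℝ) / ((1 + 1 / (m : ℝ)) ^ ((1 : ℝ) / r) - 1)) :
    (∏ ℓ ∈ Finset.Icc 1 r, (1 + (n : ℝ) / (s + ℓ))) ≤ 1 + 1 / (m : ℝ) ∧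
      ∀ s' : ℕ, s ≤ (s' : ℝ) →
        ((m + 1 : ℝ) * Nat.choose (n + s') s' ≥ (m : ℝ) * Nat.choose (n + r + s') (r + s')) :=
  stmt2_general m n r hm hr s hs
end

section
/- Let n ≥ 1, s_n = n(n+1)/2, and let f : ℝⁿ → ℝ^{n+s_n} be the free map f(x) = (x¹,…,xⁿ, xᵅxᵝ for α ≤ β). Let π : ℝ^{n+s_n} → ℝ^{n+s_n−1} be the projection that drops one fixed coordinate of index greater than n. Then π ∘ f has full 2-rank: at every point the matrix of its first and second partial derivatives has rank n + s_n − 1. -/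
/-!
The second partials are constant, and since the kept monomials `x_a x_b` are indexed by distinct
unordered pairs `{a, b}`, `∂_a ∂_b g` is a nonzero multiple (two when `a = b`) of the coordinate
vector of `x_a x_b`. So all quadratic coordinate directions lie in the span, and modulo them the
first partial `∂_a g` is the coordinate vector of `x_a`.
-/

theorem fderiv_apply_apply {𝕜 E τ : Type*} {F' : τ → Type*} [NontriviallyNormedField 𝕜]
    [NormedAddCommGroup E] [NormedSpace 𝕜 E] [Fintype τ] [∀ i, NormedAddCommGroup (F' i)]
    [∀ i, NormedSpace 𝕜 (F' i)] {Φ : E → (i : τ) → F' i} {x : E} (hΦ : DifferentiableAt 𝕜 Φ x)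
    (i : τ) (v : E) :
    fderiv 𝕜 Φ x v i = fderiv 𝕜 (fun x => Φ x i) x v := by
  rw [fderiv_apply hΦ]
  rfl

section

variable {ι κ : Type*} [Fintype ι]

theorem fderiv_apply_mul_apply (i j : ι) (y v : ι → ℝ) :
    fderiv ℝ (fun y : ι → ℝ => y i * y j) y v = v i * y j + y i * v j := by
  have h : HasFDerivAt (fun y : ι → ℝ => y i * y j) _ y :=
    (hasFDerivAt_apply (𝕜 := ℝ) i y).mul (hasFDerivAt_apply (𝕜 := ℝ) j y)
  simp [h.fderiv]
  ring

theorem fderiv_const_mul_apply_add_apply_mul_const (i j : ι) (x u v : ι → ℝ) :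
    fderiv ℝ (fun y : ι → ℝ => u i * y j + y i * u j) x v = u i * v j + v i * u j := by
  have h : HasFDerivAt (fun y : ι → ℝ => u i * y j + y i * u j) _ x :=
    ((hasFDerivAt_apply (𝕜 := ℝ) j x).const_mul (u i)).add
      ((hasFDerivAt_apply (𝕜 := ℝ) i x).mul_const (u j))
  simp [h.fderiv]
  ring

def monomialMap (q : κ → ι × ι) (y : ι → ℝ) : ι ⊕ κ → ℝ :=
  Sum.elim y fun k => y (q k).1 * y (q k).2

variable (q : κ → ι × ι)

theorem differentiable_monomialMap [Finite κ] : Differentiable ℝ (monomialMap q) := by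
  refine differentiable_pi.2 ?_
  rintro (a | k)
  · exact differentiable_apply a
  · exact (differentiable_apply _).mul (differentiable_apply _)

variable [Fintype κ]

theorem fderiv_monomialMap (y v : ι → ℝ) :
    fderiv ℝ (monomialMap q) y v =
      Sum.elim v fun k => v (q k).1 * y (q k).2 + y (q k).1 * v (q k).2 := by
  ext (a | k) <;> rw [fderiv_apply_apply (differentiable_monomialMap q y)]
  · simp [monomialMap, (hasFDerivAt_apply (𝕜 := ℝ) a y).fderiv]
  · exact fderiv_apply_mul_apply _ _ y v

theorem fderiv_fderiv_monomialMap (x u v : ι → ℝ) :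
    fderiv ℝ (fun y => fderiv ℝ (monomialMap q) y u) x v =
      Sum.elim (0 : ι → ℝ) fun k => u (q k).1 * v (q k).2 + v (q k).1 * u (q k).2 := by
  simp_rw [fderiv_monomialMap]
  have hd : Differentiable ℝ fun y : ι → ℝ =>
      (Sum.elim u fun k => u (q k).1 * y (q k).2 + y (q k).1 * u (q k).2 : ι ⊕ κ → ℝ) := by
    refine differentiable_pi.2 ?_
    rintro (a | k)
    · exact differentiable_const _
    · simp only [Sum.elim_inr]
      fun_prop
  ext (a | k) <;> rw [fderiv_apply_apply (hd x)]
  · simp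
  · exact fderiv_const_mul_apply_add_apply_mul_const _ _ x u v

theorem fderiv_fderiv_monomialMap_single_inr [DecidableEq ι] (x : ι → ℝ) (i j : ι) (r : κ) :
    fderiv ℝ (fun y => fderiv ℝ (monomialMap q) y (Pi.single i 1)) x (Pi.single j 1) (.inr r) =
      (if q r = (i, j) then 1 else 0) + (if q r = (j, i) then 1 else 0) := by
  simp only [fderiv_fderiv_monomialMap, Sum.elim_inr, Pi.single_apply, ite_zero_mul_ite_zero,
    mul_one, Prod.ext_iff]

end

theorem Submodule.pi_mem_of_forall_single_mem {τ R : Type*} [Fintype τ] [DecidableEq τ]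
    [Semiring R] {W : Submodule R (τ → R)} {w : τ → R} (h : ∀ i, w i ≠ 0 → Pi.single i 1 ∈ W) :
    w ∈ W := by
  rw [← (Pi.basisFun R τ).sum_repr w]
  refine W.sum_mem fun i _ => ?_
  by_cases hi : w i = 0
  · simp [hi]
  · simpa using W.smul_mem (w i) (h i hi)

theorem Submodule.single_mem_of_mem {τ K : Type*} [DecidableEq τ] [DivisionRing K]
    {W : Submodule K (τ → K)} {w : τ → K} (hw : w ∈ W) {i : τ} (hwi : w i ≠ 0)
    (h : ∀ j ≠ i, w j = 0) : Pi.single i 1 ∈ W := by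
  have hw_eq : w = w i • Pi.single i 1 := by
    ext j
    by_cases hj : j = i
    · simp [hj]
    · simp [hj, h j hj]
  rw [hw_eq] at hw
  simpa [smul_smul, hwi] using W.smul_mem (w i)⁻¹ hw

theorem eq_top_of_monomialMap_partialDerivs_mem {ι κ : Type*} [Fintype ι] [Fintype κ]
    [DecidableEq ι] [DecidableEq κ] {q : κ → ι × ι}
    (hq : Function.Injective fun k => s((q k).1, (q k).2)) {x : ι → ℝ}
    {W : Submodule ℝ (ι ⊕ κ → ℝ)} (h₁ : ∀ a, fderiv ℝ (monomialMap q) x (Pi.single a 1) ∈ W)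
    (h₂ : ∀ k, fderiv ℝ (fun y => fderiv ℝ (monomialMap q) y (Pi.single (q k).1 1)) x
      (Pi.single (q k).2 1) ∈ W) :
    W = ⊤ := by
  have hinr (k : κ) : Pi.single (Sum.inr k) 1 ∈ W := by
    refine W.single_mem_of_mem (h₂ k) ?_ ?_
    · rw [fderiv_fderiv_monomialMap_single_inr, if_pos rfl]
      positivity
    · rintro (a | r) hr
      · simp [fderiv_fderiv_monomialMap]
      · have hrk : r ≠ k := fun h => hr (h ▸ rfl)
        rw [fderiv_fderiv_monomialMap_single_inr, if_neg, if_neg, add_zero]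
        · exact fun h => hrk (hq (Sym2.mk_eq_mk_iff.2 (.inr h)))
        · exact fun h => hrk (hq (Sym2.mk_eq_mk_iff.2 (.inl h)))
  have hinl (a : ι) : Pi.single (Sum.inl a) 1 ∈ W := by
    have hrest : fderiv ℝ (monomialMap q) x (Pi.single a 1) - Pi.single (Sum.inl a) 1 ∈ W := by
      refine W.pi_mem_of_forall_single_mem ?_
      rintro (b | k) hb
      · simp [fderiv_monomialMap, Pi.single_apply] at hb
      · exact hinr k
    simpa using W.sub_mem (h₁ a) hrest
  refine eq_top_iff.2 fun w _ => W.pi_mem_of_forall_single_mem ?_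
  rintro (a | k) -
  exacts [hinl a, hinr k]

theorem stmt5_general (n : ℕ)
    (p₀ : {p : Fin n × Fin n // p.1 ≤ p.2})
    (g : (Fin n → ℝ) →
      (Fin n ⊕ {p : {p : Fin n × Fin n // p.1 ≤ p.2} // p ≠ p₀}) → ℝ)
    (hg : g = fun x => Sum.elim (fun α => x α) (fun p => x p.1.1.1 * x p.1.1.2))
    (x : Fin n → ℝ) :
    Submodule.span ℝ
        (Set.range (Sum.elim
          (fun α : Fin n => fderiv ℝ g x (Pi.single α 1))
          (fun p : {p : Fin n × Fin n // p.1 ≤ p.2} =>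
            fderiv ℝ (fun y => fderiv ℝ g y (Pi.single p.1.1 1)) x (Pi.single p.1.2 1)))) = ⊤ := by
  obtain rfl : g = monomialMap fun p => p.1.1 := hg
  exact eq_top_of_monomialMap_partialDerivs_mem
    (fun p p' h => Subtype.val_injective (Sym2.sortEquiv.symm.injective h))
    (fun a => Submodule.subset_span ⟨.inl a, rfl⟩) (fun p => Submodule.subset_span ⟨.inr p.1, rfl⟩)

/-- dropping one quadratic coordinate (of index > n) from the free map
`f(x) = (x^α ; x^α x^β, α ≤ β)` yields a map `ℝⁿ → ℝ^{n+s_n−1}` of full 2-rank: at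
every point its first and second partial derivative vectors span the whole target. -/
theorem stmt5 (n : ℕ) (hn : 1 ≤ n)
    (p₀ : {p : Fin n × Fin n // p.1 ≤ p.2})
    (g : (Fin n → ℝ) →
      (Fin n ⊕ {p : {p : Fin n × Fin n // p.1 ≤ p.2} // p ≠ p₀}) → ℝ)
    (hg : g = fun x => Sum.elim (fun α => x α) (fun p => x p.1.1.1 * x p.1.1.2))
    (x : Fin n → ℝ) :
    Submodule.span ℝ
        (Set.range (Sum.elim
          (fun α : Fin n => fderiv ℝ g x (Pi.single α 1))
          (fun p : {p : Fin n × Fin n // p.1 ≤ p.2} =>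
            fderiv ℝ (fun y => fderiv ℝ g y (Pi.single p.1.1 1)) x (Pi.single p.1.2 1)))) = ⊤ :=
  stmt5_general n p₀ g hg x
end

section
/- For n ≥ 2, let m_n be the middle (real) root of the cubic equation in m: n + s_n − m = m(m+1)(n+1) − m·s_m, where s_k = k(k+1)/2. Then m_n ≤ √(n/2) ≤ m_n + 1/2. -/
/-!
Put `a = √(n/2)`, so `n = 2a²`. Twice the difference of the two sides of the equation is a
monic cubic in `m`; since it vanishes at `x < m < y` it equals `(t - x)(t - m)(t - y)`.
At `t = a` it takes the value `-a(3a² - 5a + 4) < 0`, at `t = a - 1/2` the value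
`a³ + 9a²/2 - 9a/4 + 13/8 > 0`, and these signs trap the middle root between `a - 1/2` and `a`.
-/

theorem cubic_eq_mul_of_roots {R : Type*} [CommRing R] [NoZeroDivisors R] (b c d : R)
    {x y z : R} (hxy : x ≠ y) (hyz : y ≠ z) (hxz : x ≠ z)
    (hx : x ^ 3 + b * x ^ 2 + c * x + d = 0) (hy : y ^ 3 + b * y ^ 2 + c * y + d = 0)
    (hz : z ^ 3 + b * z ^ 2 + c * z + d = 0) (t : R) :
    t ^ 3 + b * t ^ 2 + c * t + d = (t - x) * (t - y) * (t - z) := by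
  have hxy' : x ^ 2 + x * y + y ^ 2 + b * (x + y) + c = 0 := by
    have : (x - y) * (x ^ 2 + x * y + y ^ 2 + b * (x + y) + c) = 0 := by
      linear_combination hx - hy
    exact (mul_eq_zero.1 this).resolve_left (sub_ne_zero.2 hxy)
  have hyz' : y ^ 2 + y * z + z ^ 2 + b * (y + z) + c = 0 := by
    have : (y - z) * (y ^ 2 + y * z + z ^ 2 + b * (y + z) + c) = 0 := by
      linear_combination hy - hz
    exact (mul_eq_zero.1 this).resolve_left (sub_ne_zero.2 hyz)
  have hsum : x + y + z + b = 0 := by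
    have : (x - z) * (x + y + z + b) = 0 := by linear_combination hxy' - hyz'
    exact (mul_eq_zero.1 this).resolve_left (sub_ne_zero.2 hxz)
  linear_combination (t ^ 2 - x ^ 2 - (t - x) * (x + y)) * hsum + (t - x) * hxy' + hx

section Sign

variable {R : Type*} [CommRing R] [LinearOrder R] [IsStrictOrderedRing R] {t x y z : R}

theorem mem_of_sub_mul_sub_mul_sub_pos (hxy : x ≤ y) (hpos : 0 < (t - x) * (t - y) * (t - z)) :
    x < t ∧ t < y ∨ z < t := by
  by_contra! h
  have hxy_factor : 0 ≤ (t - x) * (t - y) := by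
    rcases le_or_gt t x with htx | hxt
    · exact mul_nonneg_of_nonpos_of_nonpos (sub_nonpos.2 htx) (sub_nonpos.2 (htx.trans hxy))
    · exact mul_nonneg (sub_pos.2 hxt).le (sub_nonneg.2 (h.1 hxt))
  exact hpos.not_ge (mul_nonpos_of_nonneg_of_nonpos hxy_factor (sub_nonpos.2 h.2))

theorem mem_of_sub_mul_sub_mul_sub_neg (hyz : y ≤ z) (hneg : (t - x) * (t - y) * (t - z) < 0) :
    t < x ∨ y < t ∧ t < z := by
  by_contra! h
  refine hneg.not_ge ?_
  rcases le_or_gt t y with hty | hyt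
  · exact mul_nonneg_of_nonpos_of_nonpos
      (mul_nonpos_of_nonneg_of_nonpos (sub_nonneg.2 h.1) (sub_nonpos.2 hty))
      (sub_nonpos.2 (hty.trans hyz))
  · exact mul_nonneg (mul_nonneg (sub_nonneg.2 h.1) (sub_pos.2 hyt).le) (sub_nonneg.2 (h.2 hyt))

end Sign

/-- Twice the difference of the two sides of the defining equation of `m_n`, with `N = n`. -/
def thresholdCubic (N t : ℝ) : ℝ :=
  t ^ 3 - (2 * N + 1) * t ^ 2 - (2 * N + 4) * t + (N ^ 2 + 3 * N)

theorem thresholdCubic_two_mul_sq_self_neg {a : ℝ} (ha : 0 < a) :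
    thresholdCubic (2 * a ^ 2) a < 0 := by
  have hval : thresholdCubic (2 * a ^ 2) a = -a * (3 * a ^ 2 - 5 * a + 4) := by
    unfold thresholdCubic; ring
  have hquad : 0 < 3 * a ^ 2 - 5 * a + 4 := by nlinarith [sq_nonneg (a - 5 / 6)]
  rw [hval]
  exact mul_neg_of_neg_of_pos (neg_neg_of_pos ha) hquad

theorem thresholdCubic_two_mul_sq_sub_half_pos {a : ℝ} (ha : 0 ≤ a) :
    0 < thresholdCubic (2 * a ^ 2) (a - 1 / 2) := by
  have hval :
      thresholdCubic (2 * a ^ 2) (a - 1 / 2) = a ^ 3 + 9 / 2 * (a - 1 / 4) ^ 2 + 43 / 32 := by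
    unfold thresholdCubic; ring
  rw [hval]
  positivity

/-- if `m` is the middle real root of the cubic
`n + s_n − m = m(m+1)(n+1) − m·s_m` (with `s_t = t(t+1)/2`), i.e. a root having both
a smaller and a larger root, then `m ≤ √(n/2) ≤ m + 1/2` (for `n ≥ 2`). -/
theorem stmt14 (n : ℕ) (hn : 2 ≤ n) (m : ℝ)
    (hroot : (n : ℝ) + n * (n + 1) / 2 - m = m * (m + 1) * (n + 1) - m * (m * (m + 1) / 2))
    (hsmaller : ∃ x < m,
      (n : ℝ) + n * (n + 1) / 2 - x = x * (x + 1) * (n + 1) - x * (x * (x + 1) / 2))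
    (hlarger : ∃ y > m,
      (n : ℝ) + n * (n + 1) / 2 - y = y * (y + 1) * (n + 1) - y * (y * (y + 1) / 2)) :
    m ≤ Real.sqrt (n / 2) ∧ Real.sqrt (n / 2) ≤ m + 1 / 2 := by
  obtain ⟨x, hxm, hx⟩ := hsmaller
  obtain ⟨y, hmy, hy⟩ := hlarger
  set a := Real.sqrt (n / 2)
  have hn_pos : (0 : ℝ) < n := by exact_mod_cast (by omega : 0 < n)
  have ha : 0 < a := Real.sqrt_pos.2 (by positivity)
  have hn_eq : (n : ℝ) = 2 * a ^ 2 := by rw [Real.sq_sqrt (by positivity)]; ring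
  have hfactor (t : ℝ) : thresholdCubic n t = (t - x) * (t - m) * (t - y) := by
    unfold thresholdCubic
    linear_combination cubic_eq_mul_of_roots (-(2 * (n : ℝ) + 1)) (-(2 * n + 4)) (n ^ 2 + 3 * n)
      hxm.ne hmy.ne (hxm.trans hmy).ne (by linear_combination 2 * hx)
      (by linear_combination 2 * hroot) (by linear_combination 2 * hy) t
  have hneg := thresholdCubic_two_mul_sq_self_neg ha
  have hpos := thresholdCubic_two_mul_sq_sub_half_pos ha.le
  rw [← hn_eq, hfactor] at hneg hpos
  rcases mem_of_sub_mul_sub_mul_sub_pos hxm.le hpos with ⟨hxb, hbm⟩ | hyb <;>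
    rcases mem_of_sub_mul_sub_mul_sub_neg hmy.le hneg with hax | ⟨hma, hay⟩
  all_goals constructor <;> linarith
end

section
/- Let r ≥ 2, and consider at a point the k matrices T^ℓ = (Λ^{αℓℓ⋯ℓ}_a) (m × (m+1) matrices formed from the top-order coefficients of an order-r UTS operator with the last r indices all equal to ℓ), for ℓ = 1,…,k. Then the set C_k of coefficient tuples for which all k matrices T^ℓ have rank < m is an algebraic subset of codimension 2k in the space of all top-order UTS coefficient tuples. -/
open scoped BigOperators

open Matrix Set Submodule Module Finset
open scoped ENNReal NNReal

section Stmt18Aux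

lemma indep_iff_minor18 {n : ℕ} (A : Matrix (Fin (n+1)) (Fin (n+2)) ℝ) :
    LinearIndependent ℝ (fun i => A i) ↔
      ∃ j : Fin (n+2), (A.submatrix id j.succAbove).det ≠ 0 := by
  constructor
  · intro h
    -- find a standard basis vector not in the span of rows
    have hspan : ∃ j : Fin (n+2), Pi.single j (1:ℝ) ∉ span ℝ (range fun i => A i) := by
      by_contra hc
      push_neg at hc
      have htop : span ℝ (range fun i => A i) = ⊤ := by
        rw [eq_top_iff]
        rw [← (Pi.basisFun ℝ (Fin (n+2))).span_eq]
        refine span_le.2 ?_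
        rintro x ⟨j, rfl⟩
        simpa [Pi.basisFun_apply] using hc j
      have h1 : (Set.range fun i => A i).finrank ℝ ≤ n + 1 := by
        simpa using finrank_range_le_card (fun i => A i)
      rw [Set.finrank, htop, finrank_top] at h1
      simp [finrank_pi] at h1
    obtain ⟨j, hj⟩ := hspan
    refine ⟨j, ?_⟩
    set B : Matrix (Fin (n+2)) (Fin (n+2)) ℝ :=
      Matrix.of (Fin.snoc (fun i => A i) (Pi.single j (1:ℝ))) with hB
    have hBi : LinearIndependent ℝ (fun i => B i) :=
      linearIndependent_fin_snoc.2 ⟨h, hj⟩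
    have hdet : B.det ≠ 0 := by
      have := Matrix.linearIndependent_rows_iff_isUnit.1 hBi
      rw [Matrix.isUnit_iff_isUnit_det, isUnit_iff_ne_zero] at this
      exact this
    have hexp : B.det = (-1)^((Fin.last (n+1) : ℕ) + (j : ℕ)) *
        (A.submatrix id j.succAbove).det := by
      rw [Matrix.det_succ_row B (Fin.last (n+1))]
      rw [Finset.sum_eq_single j]
      · have h1 : B (Fin.last (n+1)) j = 1 := by
          simp [hB, Fin.snoc_last]
        have h2 : B.submatrix (Fin.last (n+1)).succAbove j.succAbove
            = A.submatrix id j.succAbove := by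
          ext i t
          simp [hB, Matrix.submatrix, Fin.succAbove_last, Fin.snoc_castSucc]
        rw [h1, h2]; ring
      · intro b _ hbj
        have : B (Fin.last (n+1)) b = 0 := by
          simp only [hB, Matrix.of_apply, Fin.snoc_last, Pi.single_apply]
          simp [hbj]
        rw [this]; ring
      · intro hju; exact absurd (Finset.mem_univ j) hju
    intro h0
    rw [hexp, h0, mul_zero] at hdet
    exact hdet rfl
  · rintro ⟨j, hj⟩
    have hu : IsUnit (A.submatrix id j.succAbove) := by
      rw [Matrix.isUnit_iff_isUnit_det, isUnit_iff_ne_zero]; exact hj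
    have hind : LinearIndependent ℝ (fun i => (A.submatrix id j.succAbove) i) :=
      Matrix.linearIndependent_rows_iff_isUnit.2 hu
    exact LinearIndependent.of_comp (LinearMap.funLeft ℝ ℝ j.succAbove) hind

lemma rank_lt_iff_not_indep18 {n : ℕ} (A : Matrix (Fin (n+1)) (Fin (n+2)) ℝ) :
    A.rank < n + 1 ↔ ¬ LinearIndependent ℝ (fun i => A i) := by
  constructor
  · intro hlt hind
    have hind' : LinearIndependent ℝ A := hind
    have := hind'.rank_matrix
    simp [Fintype.card_fin] at this
    omega
  · intro hind
    rcases lt_or_eq_of_le (A.rank_le_card_height.trans (by simp [Fintype.card_fin]) :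
      A.rank ≤ n + 1) with h | h
    · exact h
    · exfalso
      apply hind
      rw [linearIndependent_iff_card_eq_finrank_span, Fintype.card_fin]
      have := A.rank_eq_finrank_span_row
      rw [h] at this
      exact this

lemma exists_param18 {n : ℕ} (A : Matrix (Fin (n+1)) (Fin (n+2)) ℝ) (h : A.rank < n+1) :
    ∃ (p : Fin (n+1)) (B : Fin n → Fin (n+2) → ℝ) (c : Fin n → ℝ),
      p.insertNth (∑ t, c t • B t) B = fun i => A i := by
  have hni : ¬ LinearIndependent ℝ (fun i => A i) := (rank_lt_iff_not_indep18 A).1 h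
  obtain ⟨g, hsum, i, hgi⟩ := Fintype.not_linearIndependent_iff.1 hni
  refine ⟨i, fun t => A (i.succAbove t), fun t => -(g i)⁻¹ * g (i.succAbove t), ?_⟩
  funext i'
  rcases eq_or_ne i' i with rfl | hne
  · rw [Fin.insertNth_apply_same]
    rw [Fin.sum_univ_succAbove (fun s => g s • A s) i'] at hsum
    have h1 : ∑ t, g (i'.succAbove t) • A (i'.succAbove t) = -(g i' • A i') :=
      eq_neg_of_add_eq_zero_right hsum
    calc (∑ t, (-(g i')⁻¹ * g (i'.succAbove t)) • A (i'.succAbove t))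
        = (-(g i')⁻¹) • ∑ t, g (i'.succAbove t) • A (i'.succAbove t) := by
          rw [Finset.smul_sum]; congr 1; funext t; rw [smul_smul]
      _ = A i' := by
          rw [h1, smul_neg, neg_smul, neg_neg, smul_smul, inv_mul_cancel₀ hgi, one_smul]
  · obtain ⟨t, ht⟩ := Fin.exists_succAbove_eq (x := i') (y := i) hne
    rw [← ht, Fin.insertNth_apply_succAbove]

lemma rank_lt_iff_minors18 {n : ℕ} (A : Matrix (Fin (n+1)) (Fin (n+2)) ℝ) :
    A.rank < n + 1 ↔ ∀ j : Fin (n+2), (A.submatrix id j.succAbove).det = 0 := by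
  have key : A.rank < n + 1 ↔ ¬ LinearIndependent ℝ (fun i => A i) := by
    constructor
    · intro hlt hind
      have hind' : LinearIndependent ℝ A := hind
      have := hind'.rank_matrix
      simp [Fintype.card_fin] at this
      omega
    · intro hind
      rcases lt_or_eq_of_le (A.rank_le_card_height.trans (by simp [Fintype.card_fin]) :
        A.rank ≤ n + 1) with h | h
      · exact h
      · exfalso
        apply hind
        rw [linearIndependent_iff_card_eq_finrank_span]
        rw [Fintype.card_fin]
        have := A.rank_eq_finrank_span_row
        rw [h] at this
        exact this
  rw [key, indep_iff_minor18]
  push_neg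
  rfl

lemma rank_lt_of_last_row18 {n : ℕ} (A : Matrix (Fin (n+1)) (Fin (n+2)) ℝ) (p : Fin (n+1))
    (h : A p ∈ span ℝ (range fun t => A (p.succAbove t))) : A.rank < n + 1 := by
  rw [A.rank_eq_finrank_span_row]
  have hle : span ℝ (range A) ≤ span ℝ (range fun t => A (p.succAbove t)) := by
    rw [span_le]
    rintro x ⟨i, rfl⟩
    rcases eq_or_ne i p with rfl | hne
    · exact h
    · obtain ⟨t, ht⟩ := Fin.exists_succAbove_eq (x := i) (y := p) hne
      rw [show A i = A (p.succAbove t) by rw [ht]]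
      exact subset_span ⟨t, rfl⟩
  have h2 : finrank ℝ (span ℝ (range A)) ≤
      finrank ℝ (span ℝ (range fun t => A (p.succAbove t))) :=
    Submodule.finrank_mono hle
  have h3 : (Set.range fun t => A (p.succAbove t)).finrank ℝ ≤ n :=
    (finrank_range_le_card _).trans (by simp)
  rw [Set.finrank] at h3
  change finrank ℝ (span ℝ (range A)) < n + 1
  omega

def Phi18 (k n : ℕ) (σ : Fin k → Fin (n+1))
    (x : Fin k → (Fin n → Fin (n+2) → ℝ) × (Fin n → ℝ)) :
    Fin k → Fin (n+1) → Fin (n+2) → ℝ :=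
  fun ℓ => (σ ℓ).insertNth (∑ t, (x ℓ).2 t • (x ℓ).1 t) (x ℓ).1

lemma contDiff_phi18 (k n : ℕ) (σ : Fin k → Fin (n+1)) : ContDiff ℝ 1 (Phi18 k n σ) := by
  rw [contDiff_pi]; intro ℓ
  rw [contDiff_pi]; intro i
  have hB : ∀ t, ContDiff ℝ 1
      (fun x : Fin k → (Fin n → Fin (n+2) → ℝ) × (Fin n → ℝ) => (x ℓ).1 t) := by
    intro t; fun_prop
  rcases eq_or_ne i (σ ℓ) with rfl | hne
  · simp only [Phi18, Fin.insertNth_apply_same]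
    rw [contDiff_pi]; intro j
    have : (fun x : Fin k → (Fin n → Fin (n+2) → ℝ) × (Fin n → ℝ) =>
        (∑ t, (x ℓ).2 t • (x ℓ).1 t) j)
        = fun x => ∑ t, (x ℓ).2 t * (x ℓ).1 t j := by
      funext x; simp [Finset.sum_apply]
    rw [this]
    apply ContDiff.sum
    intro t _
    fun_prop
  · obtain ⟨t, ht⟩ := Fin.exists_succAbove_eq (x := i) (y := σ ℓ) hne
    have : (fun x : Fin k → (Fin n → Fin (n+2) → ℝ) × (Fin n → ℝ) => Phi18 k n σ x ℓ i)
        = fun x => (x ℓ).1 t := by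
      funext x; rw [Phi18, ← ht, Fin.insertNth_apply_succAbove]
    exact this ▸ (hB t)

noncomputable def B018 (n : ℕ) : Fin n → Fin (n+2) → ℝ :=
  fun t j => if (t : ℕ) = (j : ℕ) then 1 else 0

lemma est18 {n : ℕ} {δ : ℝ} (hδ : δ = ((4:ℝ)*(n+1))⁻¹)
    (B B' : Fin n → Fin (n+2) → ℝ) (c c' : Fin n → ℝ)
    (hB : ∀ t j, |B t j - B018 n t j| ≤ δ)
    (hc' : ∀ t, |c' t| ≤ δ)
    (d : ℝ) (hd0 : 0 ≤ d)
    (hdb : dist B B' ≤ d)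
    (hL : ∀ j : Fin (n+2), |(∑ t, c t * B t j) - (∑ t, c' t * B' t j)| ≤ d) :
    dist c c' ≤ 2 * d := by
  have hδpos : 0 < δ := by rw [hδ]; positivity
  have hδq : ((n : ℝ) + 1) * δ = 1/4 := by
    rw [hδ]
    have : ((4:ℝ)*(n+1)) ≠ 0 := by positivity
    field_simp
  have hn0 : (0:ℝ) ≤ (n:ℝ) := Nat.cast_nonneg n
  have hnδ : (n:ℝ) * δ = 1/4 - δ := by nlinarith [hδq]
  have hδle : δ ≤ 1/4 := by nlinarith [mul_nonneg hn0 hδpos.le]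
  set dc := dist c c' with hdc
  have hdc0 : 0 ≤ dc := dist_nonneg
  have hcs : ∀ s, |c s - c' s| ≤ dc := by
    intro s
    have := dist_le_pi_dist c c' s
    rwa [Real.dist_eq] at this
  have hBs : ∀ s j, |B s j - B' s j| ≤ d := by
    intro s j
    have h1 := dist_le_pi_dist B B' s
    have h2 := dist_le_pi_dist (B s) (B' s) j
    rw [Real.dist_eq] at h2
    linarith
  have key : ∀ t, (1 - δ) * |c t - c' t| ≤ (1 + n * δ) * d + n * δ * dc := by
    intro t
    set j : Fin (n+2) := Fin.castLE (by omega) t with hj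
    have hjt : (j : ℕ) = (t : ℕ) := rfl
    have hB0tj : B018 n t j = 1 := by simp [B018, hjt]
    have hB0sj : ∀ s : Fin n, s ≠ t → |B s j| ≤ δ := by
      intro s hs
      have hne : (s : ℕ) ≠ (t : ℕ) := fun h => hs (Fin.ext h)
      have := hB s j
      simp only [B018, hjt, hne, if_false, sub_zero] at this
      exact this
    have hBtj : 1 - δ ≤ |B t j| := by
      have h1 := hB t j
      rw [hB0tj] at h1
      have h2 := abs_le.1 h1
      have : 1 - δ ≤ B t j := by linarith [h2.1]
      exact this.trans (le_abs_self _)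
    -- algebraic identity
    have hsplit : (∑ s, c s * B s j) - (∑ s, c' s * B' s j)
        = (∑ s, (c s - c' s) * B s j) + ∑ s, c' s * (B s j - B' s j) := by
      rw [← Finset.sum_sub_distrib, ← Finset.sum_add_distrib]
      apply Finset.sum_congr rfl
      intros; ring
    have hT1 : (∑ s, (c s - c' s) * B s j)
        = (c t - c' t) * B t j + ∑ s ∈ Finset.univ.erase t, (c s - c' s) * B s j :=
      (Finset.add_sum_erase _ _ (Finset.mem_univ t)).symm
    have hmain : (c t - c' t) * B t j
        = ((∑ s, c s * B s j) - (∑ s, c' s * B' s j))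
          - (∑ s ∈ Finset.univ.erase t, (c s - c' s) * B s j)
          - ∑ s, c' s * (B s j - B' s j) := by
      rw [hsplit, hT1]; ring
    have hb2 : |∑ s ∈ Finset.univ.erase t, (c s - c' s) * B s j| ≤ n * (dc * δ) := by
      refine (Finset.abs_sum_le_sum_abs _ _).trans ?_
      have : ∀ s ∈ Finset.univ.erase t, |(c s - c' s) * B s j| ≤ dc * δ := by
        intro s hs
        rw [abs_mul]
        exact mul_le_mul (hcs s) (hB0sj s (Finset.ne_of_mem_erase hs))
          (abs_nonneg _) hdc0
      refine (Finset.sum_le_card_nsmul _ _ _ this).trans ?_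
      rw [nsmul_eq_mul]
      have hcard : ((Finset.univ.erase t).card : ℝ) ≤ n := by
        have h1 : (Finset.univ.erase t).card ≤ n := by
          simpa using Finset.card_erase_le (a := t) (s := (Finset.univ : Finset (Fin n)))
        exact_mod_cast h1
      exact mul_le_mul_of_nonneg_right hcard (by positivity)
    have hb3 : |∑ s, c' s * (B s j - B' s j)| ≤ n * (δ * d) := by
      refine (Finset.abs_sum_le_sum_abs _ _).trans ?_
      have : ∀ s ∈ (Finset.univ : Finset (Fin n)), |c' s * (B s j - B' s j)| ≤ δ * d := by
        intro s _
        rw [abs_mul]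
        exact mul_le_mul (hc' s) (hBs s j) (abs_nonneg _) hδpos.le
      refine (Finset.sum_le_card_nsmul _ _ _ this).trans ?_
      rw [nsmul_eq_mul]
      simp
    have habs : |c t - c' t| * |B t j| ≤ d + n * (dc * δ) + n * (δ * d) := by
      rw [← abs_mul, hmain]
      calc |_ - _ - _| ≤ |(∑ s, c s * B s j) - (∑ s, c' s * B' s j)|
            + |∑ s ∈ Finset.univ.erase t, (c s - c' s) * B s j|
            + |∑ s, c' s * (B s j - B' s j)| := by
              exact (abs_sub _ _).trans (add_le_add_left (abs_sub _ _) _)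
        _ ≤ d + n * (dc * δ) + n * (δ * d) := by
              exact add_le_add (add_le_add (hL j) hb2) hb3
    have : (1 - δ) * |c t - c' t| ≤ |c t - c' t| * |B t j| := by
      rw [mul_comm (1 - δ)]
      exact mul_le_mul_of_nonneg_left hBtj (abs_nonneg _)
    nlinarith [this, habs]
  -- conclude
  have hden : (0:ℝ) < 1 - δ := by linarith
  set r : ℝ := ((1 + n * δ) * d + n * δ * dc) / (1 - δ) with hr
  have hr0 : 0 ≤ r := by
    apply div_nonneg _ hden.le
    have : 0 ≤ (n:ℝ) * δ := by positivity
    nlinarith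
  have hdcr : dc ≤ r := by
    rw [hdc]
    rw [dist_pi_le_iff hr0]
    intro t
    rw [Real.dist_eq, le_div_iff₀ hden]
    calc |c t - c' t| * (1 - δ) = (1 - δ) * |c t - c' t| := by ring
      _ ≤ _ := key t
  rw [le_div_iff₀ hden] at hdcr
  nlinarith [hdcr, mul_nonneg hδpos.le hd0, mul_nonneg hδpos.le hdc0, hnδ]

noncomputable def x018 (k n : ℕ) :
    Fin k → (Fin n → Fin (n+2) → ℝ) × (Fin n → ℝ) :=
  fun _ => (B018 n, 0)

lemma anti18 (k n : ℕ) {δ : ℝ} (hδ : δ = ((4:ℝ)*(n+1))⁻¹)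
    (x y : Fin k → (Fin n → Fin (n+2) → ℝ) × (Fin n → ℝ))
    (hx : x ∈ Metric.closedBall (x018 k n) δ) (hy : y ∈ Metric.closedBall (x018 k n) δ) :
    dist x y ≤ 2 * dist (Phi18 k n (fun _ => Fin.last n) x) (Phi18 k n (fun _ => Fin.last n) y) := by
  set Φ := Phi18 k n (fun _ => Fin.last n) with hΦ
  set d := dist (Φ x) (Φ y) with hd
  have hd0 : 0 ≤ d := dist_nonneg
  rw [dist_pi_le_iff (by linarith)]
  intro ℓ
  have hdl : dist (Φ x ℓ) (Φ y ℓ) ≤ d := dist_le_pi_dist _ _ ℓ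
  -- row identification
  have hrow : ∀ t, Φ x ℓ ((Fin.last n).succAbove t) = (x ℓ).1 t := by
    intro t; simp [hΦ, Phi18, Fin.insertNth_apply_succAbove]
  have hrow' : ∀ t, Φ y ℓ ((Fin.last n).succAbove t) = (y ℓ).1 t := by
    intro t; simp [hΦ, Phi18, Fin.insertNth_apply_succAbove]
  have hdb : dist (x ℓ).1 (y ℓ).1 ≤ d := by
    rw [dist_pi_le_iff hd0]
    intro t
    have h1 := dist_le_pi_dist (Φ x ℓ) (Φ y ℓ) ((Fin.last n).succAbove t)
    rw [hrow t, hrow' t] at h1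
    linarith
  -- ball facts
  have hxball : ∀ (z : Fin k → (Fin n → Fin (n+2) → ℝ) × (Fin n → ℝ)),
      z ∈ Metric.closedBall (x018 k n) δ →
      (∀ t j, |(z ℓ).1 t j - B018 n t j| ≤ δ) ∧ (∀ t, |(z ℓ).2 t| ≤ δ) := by
    intro z hz
    rw [Metric.mem_closedBall] at hz
    have h1 : dist (z ℓ) (x018 k n ℓ) ≤ δ := le_trans (dist_le_pi_dist z (x018 k n) ℓ) hz
    rw [Prod.dist_eq, max_le_iff] at h1
    constructor
    · intro t j
      have h2 := dist_le_pi_dist (z ℓ).1 (x018 k n ℓ).1 t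
      have h3 := dist_le_pi_dist ((z ℓ).1 t) ((x018 k n ℓ).1 t) j
      rw [Real.dist_eq] at h3
      have : (x018 k n ℓ).1 t j = B018 n t j := rfl
      rw [this] at h3
      linarith [h1.1]
    · intro t
      have h2 := dist_le_pi_dist (z ℓ).2 (x018 k n ℓ).2 t
      rw [Real.dist_eq] at h2
      have : (x018 k n ℓ).2 t = 0 := rfl
      rw [this, sub_zero] at h2
      linarith [h1.2]
  have hL : ∀ j : Fin (n+2),
      |(∑ t, (x ℓ).2 t * (x ℓ).1 t j) - (∑ t, (y ℓ).2 t * (y ℓ).1 t j)| ≤ d := by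
    intro j
    have h1 := dist_le_pi_dist (Φ x ℓ) (Φ y ℓ) (Fin.last n)
    have h2 := dist_le_pi_dist (Φ x ℓ (Fin.last n)) (Φ y ℓ (Fin.last n)) j
    have hx1 : Φ x ℓ (Fin.last n) = ∑ t, (x ℓ).2 t • (x ℓ).1 t := by
      simp [hΦ, Phi18, Fin.insertNth_apply_same]
    have hy1 : Φ y ℓ (Fin.last n) = ∑ t, (y ℓ).2 t • (y ℓ).1 t := by
      simp [hΦ, Phi18, Fin.insertNth_apply_same]
    rw [hx1, hy1] at h2 h1
    rw [Real.dist_eq] at h2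
    simp only [Finset.sum_apply, Pi.smul_apply, smul_eq_mul] at h2
    linarith
  rw [Prod.dist_eq, max_le_iff]
  refine ⟨by linarith, ?_⟩
  exact est18 hδ (x ℓ).1 (y ℓ).1 (x ℓ).2 (y ℓ).2 (hxball x hx).1 (hxball y hy).2 d hd0 hdb hL


end Stmt18Aux

/-- for an order-`r` UTS operator with `r ≥ 2` the `k` matrices
`T^ℓ = (Λ^{αℓ⋯ℓ}_a)` share no entries, so the space of relevant top-order coefficient
tuples is `Fin k → Matrix (Fin m) (Fin (m+1)) ℝ`.  The locus `C_k` where all `k`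
matrices `T^ℓ` have rank `< m` is an algebraic subset of codimension `2k`, i.e. it is
a common zero locus of polynomials and its (Hausdorff) dimension is `k·m·(m+1) − 2k`. -/
theorem stmt18 (k m r : ℕ) (hk : 1 ≤ k) (hm : 1 ≤ m) (hr : 2 ≤ r)
    (C : Set (Fin k → Fin m → Fin (m + 1) → ℝ))
    (hC : C = {M | ∀ ℓ : Fin k, (Matrix.of (M ℓ)).rank < m}) :
    (∃ S : Finset (MvPolynomial (Fin k × Fin m × Fin (m + 1)) ℝ),
        C = {M | ∀ p ∈ S, MvPolynomial.eval (fun j => M j.1 j.2.1 j.2.2) p = 0}) ∧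
      dimH C = (k * m * (m + 1) - 2 * k : ℕ) := by
  obtain ⟨n, rfl⟩ : ∃ n, m = n + 1 := ⟨m - 1, by omega⟩
  subst hC
  constructor
  · -- polynomial zero locus
    classical
    set poly : Fin k × Fin (n+2) → MvPolynomial (Fin k × Fin (n+1) × Fin (n+2)) ℝ :=
      fun q => (Matrix.of fun i i' : Fin (n+1) =>
        (MvPolynomial.X (q.1, i, q.2.succAbove i') :
          MvPolynomial (Fin k × Fin (n+1) × Fin (n+2)) ℝ)).det with hpoly
    have heval : ∀ (f : Fin k × Fin (n+1) × Fin (n+2) → ℝ) (q : Fin k × Fin (n+2)),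
        MvPolynomial.eval f (poly q)
          = (Matrix.of fun i i' : Fin (n+1) => f (q.1, i, q.2.succAbove i')).det := by
      intro f q
      rw [hpoly]
      rw [RingHom.map_det]
      congr 1
      ext i i'
      simp [Matrix.map_apply]
    refine ⟨Finset.univ.image poly, ?_⟩
    ext M
    simp only [Set.mem_setOf_eq]
    constructor
    · intro hM p hp
      obtain ⟨q, -, rfl⟩ := Finset.mem_image.1 hp
      rw [heval]
      have := (rank_lt_iff_minors18 (Matrix.of (M q.1))).1 (hM q.1) q.2
      convert this using 2
      rfl
    · intro h ℓ
      rw [rank_lt_iff_minors18]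
      intro j
      have hmem : poly (ℓ, j) ∈ Finset.univ.image poly :=
        Finset.mem_image.2 ⟨(ℓ, j), Finset.mem_univ _, rfl⟩
      have := h (poly (ℓ, j)) hmem
      rw [heval] at this
      convert this using 2
      rfl
  · -- dimension
    have hfr : finrank ℝ (Fin k → (Fin n → Fin (n+2) → ℝ) × (Fin n → ℝ))
        = k * (n * (n+2) + n) := by
      simp [Module.finrank_pi_fintype, Module.finrank_prod, Module.finrank_pi,
        Finset.sum_const, Finset.card_univ]
    have harith : k * (n+1) * ((n+1) + 1) - 2 * k = k * (n * (n+2) + n) := by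
      have : k * (n+1) * ((n+1) + 1) = k * (n * (n+2) + n) + 2 * k := by ring
      omega
    rw [harith]
    set C := {M : Fin k → Fin (n+1) → Fin (n+2) → ℝ |
      ∀ ℓ : Fin k, (Matrix.of (M ℓ)).rank < n + 1} with hCdef
    have hupper : dimH C ≤ (k * (n * (n+2) + n) : ℕ) := by
      have hcover : C ⊆ ⋃ σ : Fin k → Fin (n+1), Set.range (Phi18 k n σ) := by
        intro M hM
        have hch : ∀ ℓ : Fin k, ∃ (p : Fin (n+1)) (B : Fin n → Fin (n+2) → ℝ)
            (c : Fin n → ℝ), p.insertNth (∑ t, c t • B t) B = fun i => (Matrix.of (M ℓ)) i :=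
          fun ℓ => exists_param18 _ (hM ℓ)
        choose σ B c hBc using hch
        refine Set.mem_iUnion.2 ⟨σ, ⟨fun ℓ => (B ℓ, c ℓ), ?_⟩⟩
        funext ℓ
        exact hBc ℓ
      refine (dimH_mono hcover).trans ?_
      rw [dimH_iUnion]
      refine iSup_le fun σ => ?_
      have := (contDiff_phi18 k n σ).dimH_range_le
      rw [hfr] at this
      exact this
    have hlower : ((k * (n * (n+2) + n) : ℕ) : ℝ≥0∞) ≤ dimH C := by
      set δ : ℝ := ((4:ℝ)*(n+1))⁻¹ with hδ
      have hδpos : 0 < δ := by rw [hδ]; positivity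
      set U : Set (Fin k → (Fin n → Fin (n+2) → ℝ) × (Fin n → ℝ)) :=
        Metric.closedBall (x018 k n) δ with hU
      set Φ := Phi18 k n (fun _ => Fin.last n) with hΦ
      have himg : Φ '' U ⊆ C := by
        rintro _ ⟨x, -, rfl⟩
        intro ℓ
        apply rank_lt_of_last_row18 (Matrix.of (Φ x ℓ)) (Fin.last n)
        show (Φ x ℓ) (Fin.last n) ∈ span ℝ (Set.range fun t => (Φ x ℓ) ((Fin.last n).succAbove t))
        have h1 : (Φ x ℓ) (Fin.last n) = ∑ t, (x ℓ).2 t • (x ℓ).1 t := by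
          simp [hΦ, Phi18, Fin.insertNth_apply_same]
        have h2 : ∀ t, (Φ x ℓ) ((Fin.last n).succAbove t) = (x ℓ).1 t := by
          intro t; simp [hΦ, Phi18, Fin.insertNth_apply_succAbove]
        rw [h1]
        apply Submodule.sum_mem
        intro t _
        apply Submodule.smul_mem
        apply Submodule.subset_span
        exact ⟨t, h2 t⟩
      have hanti : AntilipschitzWith 2 (fun u : U => Φ u.1) := by
        apply AntilipschitzWith.of_le_mul_dist
        intro u v
        have := anti18 k n hδ u.1 v.1 u.2 v.2
        rw [Subtype.dist_eq]
        simpa using this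
      have h1 : dimH (univ : Set U) ≤ dimH ((fun u : U => Φ u.1) '' univ) :=
        hanti.le_dimH_image univ
      have h2 : (fun u : U => Φ u.1) '' univ = Φ '' U := by
        rw [Set.image_univ]
        rw [show (fun u : U => Φ u.1) = Φ ∘ (Subtype.val) from rfl]
        rw [Set.range_comp, Subtype.range_coe]
      have h3 : dimH (univ : Set U) = dimH U := by
        have := (isometry_subtype_coe (s := U)).dimH_image (univ : Set U)
        rw [Set.image_univ, Subtype.range_coe] at this
        exact this.symm
      have h4 : dimH U = (k * (n * (n+2) + n) : ℕ) := by
        rw [Real.dimH_of_mem_nhds (Metric.closedBall_mem_nhds _ hδpos), hfr]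
      calc ((k * (n * (n+2) + n) : ℕ) : ℝ≥0∞) = dimH (univ : Set U) := by rw [h3, h4]
        _ ≤ dimH (Φ '' U) := by rw [← h2]; exact h1
        _ ≤ dimH C := dimH_mono himg
    exact le_antisymm hupper hlower
end
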